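/- Right additivity of the squared μ-norm: for any bounded operator W on L²(𝒳, μ) and any finite measurable partition {X_1,…,X_K} of 𝒳, ‖W‖_μ² = Σ_{k=1}^K ‖W π_{X_k}‖_μ². -/

import Mathlib

open MeasureTheory

namespace MuNorm

variable {𝒳 : Type*} [MeasurableSpace 𝒳]

/-- A finite measurable partition of `𝒳` (up to measure zero). -/
structure Partition (μ : Measure 𝒳) where
  J : ℕ
  Y : Fin J → Set 𝒳
  meas : ∀ j, MeasurableSet (Y j)
  cover : μ (Set.univ \ ⋃ j, Y j) = 0
  disj : ∀ j k, j ≠ k → μ (Y j ∩ Y k) = 0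

/-- `ℳ_χ(W) = ∑_j μ(Y_j) ‖W π_{Y_j}‖²`. -/
noncomputable def M (μ : Measure 𝒳)
    (proj : Set 𝒳 → (Lp ℂ 2 μ →L[ℂ] Lp ℂ 2 μ))
    (W : Lp ℂ 2 μ →L[ℂ] Lp ℂ 2 μ) (χ : Partition μ) : ℝ :=
  ∑ j, (μ (χ.Y j)).toReal * ‖W.comp (proj (χ.Y j))‖ ^ 2

/-- `‖W‖_μ = inf_χ sqrt(ℳ_χ(W))`. -/
noncomputable def munorm (μ : Measure 𝒳)
    (proj : Set 𝒳 → (Lp ℂ 2 μ →L[ℂ] Lp ℂ 2 μ))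
    (W : Lp ℂ 2 μ →L[ℂ] Lp ℂ 2 μ) : ℝ :=
  ⨅ χ : Partition μ, Real.sqrt (M μ proj W χ)

/-- `proj Y` is the operator of multiplication by the indicator of `Y`. -/
def IsIndicatorProj (μ : Measure 𝒳)
    (proj : Set 𝒳 → (Lp ℂ 2 μ →L[ℂ] Lp ℂ 2 μ)) : Prop :=
  ∀ Y : Set 𝒳, MeasurableSet Y → ∀ f : Lp ℂ 2 μ,
    (proj Y f : 𝒳 → ℂ) =ᵐ[μ] Y.indicator f

section Aux

variable {μ : Measure 𝒳} {proj : Set 𝒳 → (Lp ℂ 2 μ →L[ℂ] Lp ℂ 2 μ)}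
  (hproj : IsIndicatorProj μ proj)

include hproj

/-- `proj A ∘ proj B = proj (A ∩ B)` -/
lemma proj_comp {A B : Set 𝒳} (hA : MeasurableSet A) (hB : MeasurableSet B) :
    (proj A).comp (proj B) = proj (A ∩ B) := by
  ext f
  calc (⇑((proj A) ((proj B) f)) : 𝒳 → ℂ)
      =ᵐ[μ] A.indicator ⇑((proj B) f) := hproj A hA _
    _ =ᵐ[μ] A.indicator (B.indicator ⇑f) := (hproj B hB f).indicator
    _ = (A ∩ B).indicator ⇑f := Set.indicator_indicator A B ⇑f
    _ =ᵐ[μ] ⇑(proj (A ∩ B) f) := (hproj (A ∩ B) (hA.inter hB) f).symm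

lemma proj_null {A : Set 𝒳} (hA : MeasurableSet A) (h0 : μ A = 0) :
    proj A = 0 := by
  ext f
  calc (⇑((proj A) f) : 𝒳 → ℂ) =ᵐ[μ] A.indicator ⇑f := hproj A hA f
    _ =ᵐ[μ] ⇑((0 : Lp ℂ 2 μ →L[ℂ] Lp ℂ 2 μ) f) := by
        have h1 : ∀ᵐ x ∂μ, x ∉ A := measure_eq_zero_iff_ae_notMem.mp h0
        have h2 : (⇑((0 : Lp ℂ 2 μ →L[ℂ] Lp ℂ 2 μ) f) : 𝒳 → ℂ) =ᵐ[μ] 0 := by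
          rw [ContinuousLinearMap.zero_apply]
          exact Lp.coeFn_zero ℂ 2 μ
        filter_upwards [h1, h2] with x hx h2x
        rw [Set.indicator_of_notMem hx, h2x, Pi.zero_apply]

lemma proj_norm_le_one {A : Set 𝒳} (hA : MeasurableSet A) : ‖proj A‖ ≤ 1 := by
  refine ContinuousLinearMap.opNorm_le_bound _ zero_le_one fun f => ?_
  rw [one_mul, Lp.norm_def, Lp.norm_def]
  have h1 : eLpNorm (⇑((proj A) f)) 2 μ = eLpNorm (A.indicator ⇑f) 2 μ :=
    eLpNorm_congr_ae (hproj A hA f)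
  rw [h1]
  exact ENNReal.toReal_mono (Lp.eLpNorm_ne_top f) (eLpNorm_indicator_le _)

end Aux

section Parts

variable {μ : Measure 𝒳}

/-- Build a partition from a family indexed by an arbitrary `Fintype`. -/
noncomputable def Partition.ofFintype {ι : Type} [Fintype ι] (μ : Measure 𝒳) (Z : ι → Set 𝒳)
    (hm : ∀ i, MeasurableSet (Z i))
    (hc : μ (Set.univ \ ⋃ i, Z i) = 0)
    (hd : ∀ i j, i ≠ j → μ (Z i ∩ Z j) = 0) : Partition μ where
  J := Fintype.card ι
  Y := fun n => Z ((Fintype.equivFin ι).symm n)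
  meas := fun _ => hm _
  cover := by
    have h : ⋃ n, Z ((Fintype.equivFin ι).symm n) = ⋃ i, Z i :=
      Equiv.iSup_comp (g := fun i => Z i) (Fintype.equivFin ι).symm
    rw [h]; exact hc
  disj := fun j k h => hd _ _ (fun e => h ((Fintype.equivFin ι).symm.injective e))

lemma M_ofFintype {ι : Type} [Fintype ι]
    (proj : Set 𝒳 → (Lp ℂ 2 μ →L[ℂ] Lp ℂ 2 μ))
    (W : Lp ℂ 2 μ →L[ℂ] Lp ℂ 2 μ) (Z : ι → Set 𝒳) (hm) (hc) (hd) :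
    M μ proj W (Partition.ofFintype μ Z hm hc hd)
      = ∑ i, (μ (Z i)).toReal * ‖W.comp (proj (Z i))‖ ^ 2 :=
  Equiv.sum_comp (Fintype.equivFin ι).symm
    (fun i => (μ (Z i)).toReal * ‖W.comp (proj (Z i))‖ ^ 2)

instance [IsProbabilityMeasure μ] : Nonempty (Partition μ) :=
  ⟨⟨1, fun _ => Set.univ, fun _ => MeasurableSet.univ, by rw [Set.iUnion_const]; simp,
    fun j k h => absurd (Subsingleton.elim j k) h⟩⟩

lemma M_nonneg (proj : Set 𝒳 → (Lp ℂ 2 μ →L[ℂ] Lp ℂ 2 μ))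
    (W : Lp ℂ 2 μ →L[ℂ] Lp ℂ 2 μ) (χ : Partition μ) : 0 ≤ M μ proj W χ :=
  Finset.sum_nonneg fun _ _ => mul_nonneg ENNReal.toReal_nonneg (by positivity)

lemma M_bddBelow (proj : Set 𝒳 → (Lp ℂ 2 μ →L[ℂ] Lp ℂ 2 μ))
    (W : Lp ℂ 2 μ →L[ℂ] Lp ℂ 2 μ) : BddBelow (Set.range (M μ proj W)) :=
  ⟨0, by rintro x ⟨χ, rfl⟩; exact M_nonneg proj W χ⟩

lemma munorm_sq [IsProbabilityMeasure μ]
    (proj : Set 𝒳 → (Lp ℂ 2 μ →L[ℂ] Lp ℂ 2 μ))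
    (W : Lp ℂ 2 μ →L[ℂ] Lp ℂ 2 μ) :
    munorm μ proj W ^ 2 = ⨅ χ : Partition μ, M μ proj W χ := by
  have h1 : munorm μ proj W = Real.sqrt (⨅ χ : Partition μ, M μ proj W χ) := by
    rw [munorm]
    exact (Monotone.map_ciInf_of_continuousAt
      (Real.continuous_sqrt.continuousAt) (fun a b h => Real.sqrt_le_sqrt h)
      (M_bddBelow proj W)).symm
  rw [h1, Real.sq_sqrt (le_ciInf fun χ => M_nonneg proj W χ)]

/-- The common refinement of two partitions. -/
noncomputable def Partition.prod (κ χ : Partition μ) : Partition μ :=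
  Partition.ofFintype μ (fun p : Fin κ.J × Fin χ.J => κ.Y p.1 ∩ χ.Y p.2)
    (fun p => (κ.meas p.1).inter (χ.meas p.2))
    (by
      refine measure_mono_null ?_ (measure_union_null κ.cover χ.cover)
      rintro x ⟨-, hx⟩
      simp only [Set.mem_iUnion, Set.mem_inter_iff, Prod.exists, not_exists, not_and] at hx
      by_cases h1 : ∃ k, x ∈ κ.Y k
      · obtain ⟨k, hk⟩ := h1
        refine Or.inr ⟨Set.mem_univ x, ?_⟩
        simp only [Set.mem_iUnion, not_exists]
        exact fun j hj => hx k j hk hj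
      · exact Or.inl ⟨Set.mem_univ x, by simpa [Set.mem_iUnion] using h1⟩)
    (by
      rintro ⟨k, j⟩ ⟨k', j'⟩ h
      by_cases hkk : k = k'
      · subst hkk
        have hjj : j ≠ j' := fun e => h (by rw [e])
        refine measure_mono_null ?_ (χ.disj j j' hjj)
        intro x hx; exact ⟨hx.1.2, hx.2.2⟩
      · refine measure_mono_null ?_ (κ.disj k k' hkk)
        intro x hx; exact ⟨hx.1.1, hx.2.1⟩)

lemma M_prod (proj : Set 𝒳 → (Lp ℂ 2 μ →L[ℂ] Lp ℂ 2 μ))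
    (W : Lp ℂ 2 μ →L[ℂ] Lp ℂ 2 μ) (κ χ : Partition μ) :
    M μ proj W (κ.prod χ)
      = ∑ p : Fin κ.J × Fin χ.J,
          (μ (κ.Y p.1 ∩ χ.Y p.2)).toReal * ‖W.comp (proj (κ.Y p.1 ∩ χ.Y p.2))‖ ^ 2 :=
  M_ofFintype proj W _ _ _ _

/-- The refinement of `κ` given by a partition `c k` inside each cell of `κ`. -/
noncomputable def Partition.sigma (κ : Partition μ) (c : Fin κ.J → Partition μ) : Partition μ :=
  Partition.ofFintype μ (fun p : Σ k : Fin κ.J, Fin (c k).J => κ.Y p.1 ∩ (c p.1).Y p.2)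
    (fun p => (κ.meas p.1).inter ((c p.1).meas p.2))
    (by
      refine measure_mono_null ?_
        (measure_union_null κ.cover (measure_iUnion_null fun k => (c k).cover))
      rintro x ⟨-, hx⟩
      simp only [Set.mem_iUnion, Set.mem_inter_iff, Sigma.exists, not_exists, not_and] at hx
      by_cases h1 : ∃ k, x ∈ κ.Y k
      · obtain ⟨k, hk⟩ := h1
        refine Or.inr (Set.mem_iUnion.mpr ⟨k, ⟨Set.mem_univ x, ?_⟩⟩)
        simp only [Set.mem_iUnion, not_exists]
        exact fun j hj => hx k j hk hj
      · exact Or.inl ⟨Set.mem_univ x, by simpa [Set.mem_iUnion] using h1⟩)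
    (by
      rintro ⟨k, j⟩ ⟨k', j'⟩ h
      by_cases hkk : k = k'
      · subst hkk
        have hjj : j ≠ j' := fun e => h (by rw [e])
        refine measure_mono_null ?_ ((c k).disj j j' hjj)
        intro x hx; exact ⟨hx.1.2, hx.2.2⟩
      · refine measure_mono_null ?_ (κ.disj k k' hkk)
        intro x hx; exact ⟨hx.1.1, hx.2.1⟩)

lemma M_sigma (proj : Set 𝒳 → (Lp ℂ 2 μ →L[ℂ] Lp ℂ 2 μ))
    (W : Lp ℂ 2 μ →L[ℂ] Lp ℂ 2 μ) (κ : Partition μ) (c : Fin κ.J → Partition μ) :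
    M μ proj W (κ.sigma c)
      = ∑ k, ∑ j : Fin (c k).J,
          (μ (κ.Y k ∩ (c k).Y j)).toReal * ‖W.comp (proj (κ.Y k ∩ (c k).Y j))‖ ^ 2 := by
  rw [Partition.sigma, M_ofFintype, ← Finset.univ_sigma_univ, Finset.sum_sigma]

lemma sum_measure_inter_le [IsProbabilityMeasure μ] (κ : Partition μ) (Y : Set 𝒳)
    (hY : MeasurableSet Y) :
    ∑ k, (μ (κ.Y k ∩ Y)).toReal ≤ (μ Y).toReal := by
  have hd : ((Finset.univ : Finset (Fin κ.J)) : Set (Fin κ.J)).Pairwise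
      (Function.onFun (AEDisjoint μ) fun k => κ.Y k ∩ Y) := by
    intro k _ k' _ hkk
    refine measure_mono_null ?_ (κ.disj k k' hkk)
    intro x hx; exact ⟨hx.1.1, hx.2.1⟩
  have hm : ∀ k ∈ (Finset.univ : Finset (Fin κ.J)),
      NullMeasurableSet (κ.Y k ∩ Y) μ :=
    fun k _ => ((κ.meas k).inter hY).nullMeasurableSet
  calc ∑ k, (μ (κ.Y k ∩ Y)).toReal
      = (∑ k, μ (κ.Y k ∩ Y)).toReal :=
        (ENNReal.toReal_sum fun k _ => measure_ne_top μ _).symm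
    _ = (μ (⋃ k ∈ Finset.univ, (κ.Y k ∩ Y))).toReal := by
        rw [measure_biUnion_finset₀ hd hm]
    _ ≤ (μ Y).toReal :=
        ENNReal.toReal_mono (measure_ne_top μ Y)
          (measure_mono (Set.iUnion₂_subset fun k _ => Set.inter_subset_right))

end Parts

theorem munorm_sq_right_additive (μ : Measure 𝒳) [IsProbabilityMeasure μ]
    (proj : Set 𝒳 → (Lp ℂ 2 μ →L[ℂ] Lp ℂ 2 μ))
    (hproj : IsIndicatorProj μ proj)
    (W : Lp ℂ 2 μ →L[ℂ] Lp ℂ 2 μ)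
    (κ : Partition μ) :
    munorm μ proj W ^ 2 = ∑ k, munorm μ proj (W.comp (proj (κ.Y k))) ^ 2 := by
  classical
  simp only [munorm_sq]
  -- goal : ⨅ χ, M μ proj W χ = ∑ k, ⨅ χ, M μ proj (W.comp (proj (κ.Y k))) χ
  apply le_antisymm
  · -- ε-argument using a common refinement of near-optimal partitions
    refine le_of_forall_pos_le_add fun ε hε => ?_
    have hKpos : 0 < κ.J := by
      by_contra h
      push_neg at h
      have h0 : κ.J = 0 := Nat.le_zero.mp h
      haveI hE : IsEmpty (Fin κ.J) := by rw [h0]; infer_instance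
      have hc := κ.cover
      rw [Set.iUnion_of_empty, Set.diff_empty, measure_univ] at hc
      exact one_ne_zero hc
    have hKne : (κ.J : ℝ) ≠ 0 := Nat.cast_ne_zero.mpr hKpos.ne'
    set δ : ℝ := ε / κ.J with hδ
    have hδpos : 0 < δ := div_pos hε (Nat.cast_pos.mpr hKpos)
    have hch : ∀ k, ∃ χk : Partition μ,
        M μ proj (W.comp (proj (κ.Y k))) χk
          < (⨅ χ, M μ proj (W.comp (proj (κ.Y k))) χ) + δ :=
      fun k => exists_lt_of_ciInf_lt (lt_add_of_pos_right _ hδpos)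
    choose c hc using hch
    calc (⨅ χ, M μ proj W χ) ≤ M μ proj W (κ.sigma c) := ciInf_le (M_bddBelow proj W) _
      _ ≤ ∑ k, M μ proj (W.comp (proj (κ.Y k))) (c k) := by
          rw [M_sigma]
          refine Finset.sum_le_sum fun k _ => ?_
          show _ ≤ ∑ j : Fin (c k).J, (μ ((c k).Y j)).toReal *
            ‖(W.comp (proj (κ.Y k))).comp (proj ((c k).Y j))‖ ^ 2
          refine Finset.sum_le_sum fun j _ => ?_
          rw [← proj_comp hproj (κ.meas k) ((c k).meas j),
            ← ContinuousLinearMap.comp_assoc]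
          exact mul_le_mul_of_nonneg_right
            (ENNReal.toReal_mono (measure_ne_top μ _)
              (measure_mono Set.inter_subset_right)) (by positivity)
      _ ≤ ∑ k, ((⨅ χ, M μ proj (W.comp (proj (κ.Y k))) χ) + δ) :=
          Finset.sum_le_sum fun k _ => (hc k).le
      _ = (∑ k, ⨅ χ, M μ proj (W.comp (proj (κ.Y k))) χ) + ε := by
          rw [Finset.sum_add_distrib, Finset.sum_const, Finset.card_univ,
            Fintype.card_fin, nsmul_eq_mul, hδ, mul_div_cancel₀ ε hKne]
  · refine le_ciInf fun χ => ?_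
    have hterm : ∀ (k : Fin κ.J) (p : Fin κ.J × Fin χ.J),
        (μ (κ.Y p.1 ∩ χ.Y p.2)).toReal *
            ‖(W.comp (proj (κ.Y k))).comp (proj (κ.Y p.1 ∩ χ.Y p.2))‖ ^ 2
          = if k = p.1 then
              (μ (κ.Y p.1 ∩ χ.Y p.2)).toReal * ‖W.comp (proj (κ.Y p.1 ∩ χ.Y p.2))‖ ^ 2
            else 0 := by
      intro k p
      rw [ContinuousLinearMap.comp_assoc,
        proj_comp hproj (κ.meas k) ((κ.meas p.1).inter (χ.meas p.2))]
      by_cases h : k = p.1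
      · rw [if_pos h, h, ← Set.inter_assoc, Set.inter_self]
      · have hnull : μ (κ.Y k ∩ (κ.Y p.1 ∩ χ.Y p.2)) = 0 := by
          refine measure_mono_null ?_ (κ.disj k p.1 h)
          intro x hx; exact ⟨hx.1, hx.2.1⟩
        rw [if_neg h,
          proj_null hproj ((κ.meas k).inter ((κ.meas p.1).inter (χ.meas p.2))) hnull,
          ContinuousLinearMap.comp_zero, norm_zero]
        ring
    have s2 : ∑ k, M μ proj (W.comp (proj (κ.Y k))) (κ.prod χ) = M μ proj W (κ.prod χ) := by
      calc ∑ k, M μ proj (W.comp (proj (κ.Y k))) (κ.prod χ)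
          = ∑ k, ∑ p : Fin κ.J × Fin χ.J,
              ((μ (κ.Y p.1 ∩ χ.Y p.2)).toReal *
                ‖(W.comp (proj (κ.Y k))).comp (proj (κ.Y p.1 ∩ χ.Y p.2))‖ ^ 2) :=
            Finset.sum_congr rfl fun k _ => M_prod proj _ κ χ
        _ = ∑ p : Fin κ.J × Fin χ.J, ∑ k,
              (if k = p.1 then
                (μ (κ.Y p.1 ∩ χ.Y p.2)).toReal * ‖W.comp (proj (κ.Y p.1 ∩ χ.Y p.2))‖ ^ 2
              else 0) := by
            simp only [hterm]; exact Finset.sum_comm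
        _ = ∑ p : Fin κ.J × Fin χ.J,
              (μ (κ.Y p.1 ∩ χ.Y p.2)).toReal * ‖W.comp (proj (κ.Y p.1 ∩ χ.Y p.2))‖ ^ 2 := by
            refine Finset.sum_congr rfl fun p _ => ?_
            rw [Finset.sum_ite_eq', if_pos (Finset.mem_univ _)]
        _ = M μ proj W (κ.prod χ) := (M_prod proj W κ χ).symm
    have s3 : M μ proj W (κ.prod χ) ≤ M μ proj W χ := by
      rw [M_prod, Fintype.sum_prod_type]
      rw [Finset.sum_comm]
      show _ ≤ ∑ j, (μ (χ.Y j)).toReal * ‖W.comp (proj (χ.Y j))‖ ^ 2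
      refine Finset.sum_le_sum fun j _ => ?_
      have hb : ∀ k : Fin κ.J,
          ‖W.comp (proj (κ.Y k ∩ χ.Y j))‖ ≤ ‖W.comp (proj (χ.Y j))‖ := by
        intro k
        have he : W.comp (proj (κ.Y k ∩ χ.Y j))
            = (W.comp (proj (χ.Y j))).comp (proj (κ.Y k)) := by
          rw [ContinuousLinearMap.comp_assoc, proj_comp hproj (χ.meas j) (κ.meas k),
            Set.inter_comm]
        rw [he]
        calc ‖(W.comp (proj (χ.Y j))).comp (proj (κ.Y k))‖
            ≤ ‖W.comp (proj (χ.Y j))‖ * ‖proj (κ.Y k)‖ :=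
              ContinuousLinearMap.opNorm_comp_le _ _
          _ ≤ ‖W.comp (proj (χ.Y j))‖ * 1 :=
              mul_le_mul_of_nonneg_left (proj_norm_le_one hproj (κ.meas k)) (norm_nonneg _)
          _ = ‖W.comp (proj (χ.Y j))‖ := mul_one _
      calc ∑ k, (μ (κ.Y k ∩ χ.Y j)).toReal * ‖W.comp (proj (κ.Y k ∩ χ.Y j))‖ ^ 2
          ≤ ∑ k, (μ (κ.Y k ∩ χ.Y j)).toReal * ‖W.comp (proj (χ.Y j))‖ ^ 2 :=
            Finset.sum_le_sum fun k _ => mul_le_mul_of_nonneg_left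
              (pow_le_pow_left₀ (norm_nonneg _) (hb k) 2) ENNReal.toReal_nonneg
        _ = (∑ k, (μ (κ.Y k ∩ χ.Y j)).toReal) * ‖W.comp (proj (χ.Y j))‖ ^ 2 :=
            (Finset.sum_mul _ _ _).symm
        _ ≤ (μ (χ.Y j)).toReal * ‖W.comp (proj (χ.Y j))‖ ^ 2 :=
            mul_le_mul_of_nonneg_right (sum_measure_inter_le κ _ (χ.meas j)) (by positivity)
    calc ∑ k, ⨅ χ', M μ proj (W.comp (proj (κ.Y k))) χ'
        ≤ ∑ k, M μ proj (W.comp (proj (κ.Y k))) (κ.prod χ) :=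
          Finset.sum_le_sum fun k _ => ciInf_le (M_bddBelow proj _) _
      _ = M μ proj W (κ.prod χ) := s2
      _ ≤ M μ proj W χ := s3

end MuNorm
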